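/- Let A, B, C, D, E, F ∈ ℝ⁴ with A ≠ B. For X ∈ {C, D, E, F} let f_X : ℝ⁴ → ℝ, f_X(v) = S_{ABX}(v)², the squared deviated area of triangle ABX, and let Df_X(0) denote its derivative at v = 0. Then for every vector w ∈ ℝ⁴ orthogonal to B − A, the following linear dependence holds: V(A,B,D,F,E)·Df_C(0)(w) + V(A,B,C,E,F)·Df_D(0)(w) + V(A,B,C,F,D)·Df_E(0)(w) + V(A,B,C,D,E)·Df_F(0)(w) = 0. Equivalently, −V(A,B,D,E,F)·Df_C(0) + V(A,B,C,E,F)·Df_D(0) − V(A,B,C,D,F)·Df_E(0) + V(A,B,C,D,E)·Df_F(0) vanishes on the orthogonal complement of B − A. -/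

import Mathlib

/-- Area of the triangle with vertices `P`, `Q`, `R`. -/
noncomputable def triArea {n : ℕ} (P Q R : EuclideanSpace ℝ (Fin n)) : ℝ :=
  (1/2) * Real.sqrt (‖Q - P‖^2 * ‖R - P‖^2 - (inner ℝ (Q - P) (R - P) : ℝ)^2)

/-- Midpoint of two points. -/
noncomputable def mid {n : ℕ} (P Q : EuclideanSpace ℝ (Fin n)) : EuclideanSpace ℝ (Fin n) :=
  (1/2 : ℝ) • (P + Q)

/-- Orthogonal projection ℝ⁴ → ℝ³ onto the first three coordinates. -/
noncomputable def proj (x : EuclideanSpace ℝ (Fin 4)) : EuclideanSpace ℝ (Fin 3) :=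
  (WithLp.equiv 2 (Fin 3 → ℝ)).symm fun i => x i.castSucc

/-- Inclusion ℝ³ → ℝ⁴, (v₁,v₂,v₃) ↦ (v₁,v₂,v₃,0). -/
noncomputable def lift (v : EuclideanSpace ℝ (Fin 3)) : EuclideanSpace ℝ (Fin 4) :=
  (WithLp.equiv 2 (Fin 4 → ℝ)).symm (Fin.snoc (WithLp.equiv 2 (Fin 3 → ℝ) v) 0)

/-- Signed volume of the 4-simplex `P₀P₁P₂P₃P₄`. -/
noncomputable def vol4 (P₀ P₁ P₂ P₃ P₄ : EuclideanSpace ℝ (Fin 4)) : ℝ :=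
  (1/24) * Matrix.det (Matrix.of fun i j => ![P₁ - P₀, P₂ - P₀, P₃ - P₀, P₄ - P₀] j i)

/-- Unsigned volume of the tetrahedron `Q₀Q₁Q₂Q₃` in ℝ³. -/
noncomputable def vol3 (Q₀ Q₁ Q₂ Q₃ : EuclideanSpace ℝ (Fin 3)) : ℝ :=
  (1/6) * |Matrix.det (Matrix.of fun i j => ![Q₁ - Q₀, Q₂ - Q₀, Q₃ - Q₀] j i)|

/-- Deviated area of triangle ABX for a deviation v of edge AB. -/
noncomputable def devArea (A B X v : EuclideanSpace ℝ (Fin 4)) : ℝ :=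
  4 * triArea (mid B X) (mid X A) (mid A B + v)

/-- Determinant of the Jacobian matrix at 0 of a map ℝ³ → ℝ³. -/
noncomputable def jacDet (f : EuclideanSpace ℝ (Fin 3) → (Fin 3 → ℝ)) : ℝ :=
  Matrix.det (Matrix.of fun i j => fderiv ℝ f 0 (EuclideanSpace.single j 1) i)

/- ====================== auxiliary lemmas ====================== -/

theorem myDetFinFour (M : Matrix (Fin 4) (Fin 4) ℝ) : M.det =
    M 0 0*M 1 1*M 2 2*M 3 3 - M 0 0*M 1 1*M 2 3*M 3 2 - M 0 0*M 1 2*M 2 1*M 3 3 + M 0 0*M 1 2*M 2 3*M 3 1 + M 0 0*M 1 3*M 2 1*M 3 2 - M 0 0*M 1 3*M 2 2*M 3 1 - M 0 1*M 1 0*M 2 2*M 3 3 + M 0 1*M 1 0*M 2 3*M 3 2 + M 0 1*M 1 2*M 2 0*M 3 3 - M 0 1*M 1 2*M 2 3*M 3 0 - M 0 1*M 1 3*M 2 0*M 3 2 + M 0 1*M 1 3*M 2 2*M 3 0 + M 0 2*M 1 0*M 2 1*M 3 3 - M 0 2*M 1 0*M 2 3*M 3 1 - M 0 2*M 1 1*M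 2 0*M 3 3 + M 0 2*M 1 1*M 2 3*M 3 0 + M 0 2*M 1 3*M 2 0*M 3 1 - M 0 2*M 1 3*M 2 1*M 3 0 - M 0 3*M 1 0*M 2 1*M 3 2 + M 0 3*M 1 0*M 2 2*M 3 1 + M 0 3*M 1 1*M 2 0*M 3 2 - M 0 3*M 1 1*M 2 2*M 3 0 - M 0 3*M 1 2*M 2 0*M 3 1 + M 0 3*M 1 2*M 2 1*M 3 0 := by
  simp [Matrix.det_succ_row_zero, Fin.sum_univ_succ, Fin.succAbove,
    show (Fin.succ 0 : Fin 4) = 1 from rfl, show (Fin.succ 1 : Fin 4) = 2 from rfl,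
    show (Fin.succ 2 : Fin 4) = 3 from rfl, show (Fin.castSucc 2 : Fin 4) = 2 from rfl,
    show (Fin.castSucc 1 : Fin 4) = 1 from rfl, show (Fin.castSucc 0 : Fin 4) = 0 from rfl,
    show ((1:Fin 4) < 3) from by decide, show ((1:Fin 4) < 2) from by decide]
  ring

theorem quadDeriv (a b w : EuclideanSpace ℝ (Fin 4)) :
    fderiv ℝ (fun v : EuclideanSpace ℝ (Fin 4) =>
        (4:ℝ) * ((inner ℝ a a : ℝ) * inner ℝ (b + v) (b + v)
          - (inner ℝ a (b + v) : ℝ) * (inner ℝ a (b + v) : ℝ))) 0 w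
      = 8 * (inner ℝ a a : ℝ) * (inner ℝ b w : ℝ) - 8 * (inner ℝ a b : ℝ) * (inner ℝ a w : ℝ) := by
  have h1 : HasFDerivAt (fun v : EuclideanSpace ℝ (Fin 4) => b + v)
      (ContinuousLinearMap.id ℝ (EuclideanSpace ℝ (Fin 4))) 0 :=
    (hasFDerivAt_id (0 : EuclideanSpace ℝ (Fin 4))).const_add b
  have h2 := h1.inner ℝ h1
  have h3 := (hasFDerivAt_const a (0 : EuclideanSpace ℝ (Fin 4))).inner ℝ h1
  have h5 := ((h2.const_mul ((inner ℝ a a : ℝ))).sub (h3.mul h3)).const_mul (4:ℝ)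
  rw [HasFDerivAt.fderiv (f := fun v : EuclideanSpace ℝ (Fin 4) =>
        (4:ℝ) * ((inner ℝ a a : ℝ) * inner ℝ (b + v) (b + v)
          - (inner ℝ a (b + v) : ℝ) * (inner ℝ a (b + v) : ℝ))) h5]
  simp [fderivInnerCLM_apply, mul_comm, sq]
  rw [real_inner_comm w b]
  ring

theorem devArea_sq (A B X v : EuclideanSpace ℝ (Fin 4)) :
    devArea A B X v ^ 2 =
      (4:ℝ) * ((inner ℝ ((1/2:ℝ) • (A - B)) ((1/2:ℝ) • (A - B)) : ℝ)
          * inner ℝ ((1/2:ℝ) • (A - X) + v) ((1/2:ℝ) • (A - X) + v)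
        - (inner ℝ ((1/2:ℝ) • (A - B)) ((1/2:ℝ) • (A - X) + v) : ℝ)
          * (inner ℝ ((1/2:ℝ) • (A - B)) ((1/2:ℝ) • (A - X) + v) : ℝ)) := by
  have e1 : mid X A - mid B X = (1/2:ℝ) • (A - B) := by
    simp only [mid]; module
  have e2 : mid A B + v - mid B X = (1/2:ℝ) • (A - X) + v := by
    simp only [mid]; module
  have hCS := real_inner_mul_inner_self_le (mid X A - mid B X) (mid A B + v - mid B X)
  rw [real_inner_self_eq_norm_sq, real_inner_self_eq_norm_sq] at hCS
  have hnn : 0 ≤ ‖mid X A - mid B X‖^2 * ‖mid A B + v - mid B X‖^2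
      - (inner ℝ (mid X A - mid B X) (mid A B + v - mid B X) : ℝ)^2 := by
    nlinarith [hCS]
  rw [devArea, triArea]
  rw [mul_pow, mul_pow, Real.sq_sqrt hnn]
  rw [← real_inner_self_eq_norm_sq, ← real_inner_self_eq_norm_sq, e1, e2]
  ring

theorem devDeriv (A B X w : EuclideanSpace ℝ (Fin 4))
    (hw : (inner ℝ w (B - A) : ℝ) = 0) :
    fderiv ℝ (fun v => devArea A B X v ^ 2) 0 w
      = (inner ℝ (A - B) (A - B) : ℝ) * (inner ℝ (A - X) w : ℝ) := by
  have hfun : (fun v => devArea A B X v ^ 2) =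
      fun v : EuclideanSpace ℝ (Fin 4) =>
        (4:ℝ) * ((inner ℝ ((1/2:ℝ) • (A - B)) ((1/2:ℝ) • (A - B)) : ℝ)
            * inner ℝ ((1/2:ℝ) • (A - X) + v) ((1/2:ℝ) • (A - X) + v)
          - (inner ℝ ((1/2:ℝ) • (A - B)) ((1/2:ℝ) • (A - X) + v) : ℝ)
            * (inner ℝ ((1/2:ℝ) • (A - B)) ((1/2:ℝ) • (A - X) + v) : ℝ)) :=
    funext (devArea_sq A B X)
  rw [hfun, quadDeriv]
  have h0 : (inner ℝ (A - B) w : ℝ) = 0 := by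
    have e : A - B = -(B - A) := by abel
    rw [e, inner_neg_left, real_inner_comm, hw, neg_zero]
  simp only [real_inner_smul_left, real_inner_smul_right, h0]
  ring

set_option maxRecDepth 4000 in
/-- the linear dependence
V(A,B,D,F,E)·dS²_{ABC} + V(A,B,C,E,F)·dS²_{ABD} + V(A,B,C,F,D)·dS²_{ABE}
 + V(A,B,C,D,E)·dS²_{ABF} = 0 on vectors w orthogonal to B − A,
where dS²_{ABX} is the derivative at v = 0 of v ↦ S_{ABX}(v)². -/
theorem deviation_linear_dependence
    (A B C D E F : EuclideanSpace ℝ (Fin 4)) (hAB : A ≠ B)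
    (w : EuclideanSpace ℝ (Fin 4)) (hw : (inner ℝ w (B - A) : ℝ) = 0) :
    vol4 A B D F E * fderiv ℝ (fun v => devArea A B C v ^ 2) 0 w +
    vol4 A B C E F * fderiv ℝ (fun v => devArea A B D v ^ 2) 0 w +
    vol4 A B C F D * fderiv ℝ (fun v => devArea A B E v ^ 2) 0 w +
    vol4 A B C D E * fderiv ℝ (fun v => devArea A B F v ^ 2) 0 w = 0 := by
  rw [devDeriv A B C w hw, devDeriv A B D w hw, devDeriv A B E w hw, devDeriv A B F w hw]
  have hw' : w 0 * (B 0 - A 0) + w 1 * (B 1 - A 1) + w 2 * (B 2 - A 2) + w 3 * (B 3 - A 3)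
      = 0 := by
    have h := hw
    simp [PiLp.inner_apply, RCLike.inner_apply, Fin.sum_univ_four, PiLp.sub_apply] at h
    linear_combination h
  have key : vol4 A B D F E * (inner ℝ (A - C) w : ℝ) + vol4 A B C E F * (inner ℝ (A - D) w : ℝ) +
      vol4 A B C F D * (inner ℝ (A - E) w : ℝ) + vol4 A B C D E * (inner ℝ (A - F) w : ℝ) = 0 := by
    simp only [vol4, myDetFinFour, Matrix.of_apply, Matrix.cons_val', Matrix.cons_val_zero,
      Matrix.cons_val_one, Matrix.head_cons, Matrix.cons_val_two, Matrix.tail_cons,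
      Matrix.cons_val_three, Matrix.head_fin_const, Matrix.cons_val_fin_one,
      PiLp.inner_apply, RCLike.inner_apply, conj_trivial, Fin.sum_univ_four, PiLp.sub_apply]
    linear_combination ((1/24) * ( (C 0 - A 0)*(D 1 - A 1)*(E 2 - A 2)*(F 3 - A 3) - (C 0 - A 0)*(D 1 - A 1)*(F 2 - A 2)*(E 3 - A 3) - (C 0 - A 0)*(E 1 - A 1)*(D 2 - A 2)*(F 3 - A 3) + (C 0 - A 0)*(E 1 - A 1)*(F 2 - A 2)*(D 3 - A 3) + (C 0 - A 0)*(F 1 - A 1)*(D 2 - A 2)*(E 3 - A 3) - (C 0 - A 0)*(F 1 - A 1)*(E 2 - A 2)*(D 3 - A 3) - (D 0 - A 0)*(C 1 - A 1)*(E 2 - A 2)*(F 3 - A 3) + (D 0 - A 0)*(C 1 - A 1)*(F 2 - A 2)*(E 3 - A 3) + (D 0 - A 0)*(E 1 - A 1)*(C 2 - A 2)*(F 3 - A 3) - (D 0 - A 0)*(E 1 - A 1)*(F 2 - A 2)*(C 3 - A 3) - (D 0 - A 0)*(F 1 - A 1)*(C 2 - A 2)*(E 3 - A 3) + (D 0 -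 A 0)*(F 1 - A 1)*(E 2 - A 2)*(C 3 - A 3) + (E 0 - A 0)*(C 1 - A 1)*(D 2 - A 2)*(F 3 - A 3) - (E 0 - A 0)*(C 1 - A 1)*(F 2 - A 2)*(D 3 - A 3) - (E 0 - A 0)*(D 1 - A 1)*(C 2 - A 2)*(F 3 - A 3) + (E 0 - A 0)*(D 1 - A 1)*(F 2 - A 2)*(C 3 - A 3) + (E 0 - A 0)*(F 1 - A 1)*(C 2 - A 2)*(D 3 - A 3) - (E 0 - A 0)*(F 1 - A 1)*(D 2 - A 2)*(C 3 - A 3) - (F 0 - A 0)*(C 1 - A 1)*(D 2 - A 2)*(E 3 - A 3) + (F 0 - A 0)*(C 1 - A 1)*(E 2 - A 2)*(D 3 - A 3) + (F 0 - A 0)*(D 1 - A 1)*(C 2 - A 2)*(E 3 - A 3) - (F 0 - A 0)*(D 1 - A 1)*(E 2 - A 2)*(C 3 - A 3) - (F 0 - A 0)*(E 1 - A 1)*(C 2 - A 2)*(D 3 - A 3) + (F 0 - A 0)*(E 1 - A 1)*(D 2 - A 2)*(C 3 - A 3))) * hw'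
  linear_combination (inner ℝ (A - B) (A - B) : ℝ) * key
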